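/- Let p be an odd prime. A subgroup of Hol(ℤ/p²ℤ), acting naturally on ℤ/p²ℤ, is transitive if and only if it contains an element of order p². -/

import Mathlib

lemma aux_iter (p : ℕ) (g : Equiv.Perm (ZMod (p^2))) (a c : ZMod (p^2))
    (hg : ∀ x, g x = a + (1 + (p : ZMod (p^2))*c) * x)
    (hpp : (p : ZMod (p^2)) * p = 0) :
    ∀ (n : ℕ) (x : ZMod (p^2)),
      (g^n) x = a * ((n : ZMod (p^2)) + ((n.choose 2 : ℕ) : ZMod (p^2)) * (p : ZMod (p^2)) * c)
        + (1 + (n : ZMod (p^2))*(p : ZMod (p^2))*c) * x := by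
  intro n
  induction n with
  | zero => intro x; simp
  | succ n ih =>
    intro x
    have hstep : (g ^ (n + 1)) x = g ((g ^ n) x) := by
      simp [pow_succ']
    rw [hstep, ih, hg]
    have hch : (((n+1).choose 2 : ℕ) : ZMod (p^2)) = ((n.choose 2 : ℕ) : ZMod (p^2)) + n := by
      rw [Nat.choose_succ_succ, Nat.choose_one_right]; push_cast; ring
    rw [hch]
    push_cast
    linear_combination (a*((n.choose 2 : ℕ) : ZMod (p^2))*c^2 + (n:ZMod (p^2))*c^2*x) * hpp

lemma aux_order (p : ℕ) (hp : p.Prime) (hodd : Odd p)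
    (g : Equiv.Perm (ZMod (p^2))) (a c : ZMod (p^2))
    (hg : ∀ x, g x = a + (1 + (p : ZMod (p^2))*c) * x)
    (ha : a * (p : ZMod (p^2)) ≠ 0) : orderOf g = p^2 := by
  have hpp : (p : ZMod (p^2)) * p = 0 := by
    have h : ((p*p : ℕ) : ZMod (p^2)) = 0 := by
      rw [← pow_two]; exact ZMod.natCast_self _
    push_cast at h; exact h
  have hiter := aux_iter p g a c hg hpp
  -- p ∣ choose 2 for odd m
  have hdvd : ∀ m : ℕ, Odd m → ((m.choose 2 : ℕ) : ZMod (p^2)) * (p : ZMod (p^2))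
      = ((m : ZMod (p^2)) * p) * (((m-1)/2 : ℕ) : ZMod (p^2)) := by
    intro m hm
    have h2 : 2 ∣ m - 1 := by
      obtain ⟨k, hk⟩ := hm; omega
    have : m.choose 2 = m * ((m-1)/2) := by
      rw [Nat.choose_two_right, Nat.mul_div_assoc m h2]
    rw [this]; push_cast [Nat.mul_div_assoc]; ring
  -- g ^ (p^2) = 1
  have hsq : g ^ (p^2) = 1 := by
    ext x
    rw [hiter (p^2) x]
    have h0 : ((p^2 : ℕ) : ZMod (p^2)) = 0 := ZMod.natCast_self _
    have hodd2 : Odd (p^2) := hodd.pow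
    rw [Equiv.Perm.one_apply]
    push_cast at h0 ⊢
    rw [hdvd (p^2) hodd2]
    push_cast
    rw [h0]
    ring
  -- g ^ p ≠ 1
  have hne : g ^ p ≠ 1 := by
    intro h1
    have h2 : (g ^ p) 0 = 0 := by rw [h1]; rfl
    rw [hiter p 0] at h2
    rw [hdvd p hodd] at h2
    apply ha
    calc a * (p : ZMod (p^2)) = a * ((p : ZMod (p^2)) + (p : ZMod (p^2)) * (p : ZMod (p^2)) * (((p-1)/2 : ℕ) : ZMod (p^2)) * c) := by rw [hpp]; ring
    _ = 0 := by rw [← h2]; ring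
  have hdvd2 : orderOf g ∣ p^2 := orderOf_dvd_of_pow_eq_one hsq
  obtain ⟨k, hk2, hk⟩ := (Nat.dvd_prime_pow hp).mp hdvd2
  rcases Nat.lt_or_ge k 2 with h | h
  · exfalso
    apply hne
    have hdv : orderOf g ∣ p := by
      rw [hk]
      calc p ^ k ∣ p ^ 1 := pow_dvd_pow p (by omega)
      _ = p := pow_one p
    exact orderOf_dvd_iff_pow_eq_one.mp hdv
  · have hk1 : k = 2 := le_antisymm hk2 h
    rw [hk, hk1]

lemma aux_trans (p : ℕ) (hp : p.Prime)
    (H : Subgroup (Equiv.Perm (ZMod (p ^ 2))))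
    (f : Equiv.Perm (ZMod (p ^ 2))) (hfH : f ∈ H) (hord : orderOf f = p ^ 2)
    (x y : ZMod (p ^ 2)) : ∃ g ∈ H, g x = y := by
  haveI : NeZero (p ^ 2) := ⟨pow_ne_zero 2 hp.ne_zero⟩
  -- every point has minimal period dividing p^2
  have hper : ∀ z : ZMod (p ^ 2), Function.minimalPeriod f z ∣ p ^ 2 := by
    intro z
    apply Function.IsPeriodicPt.minimalPeriod_dvd
    show (⇑f)^[p ^ 2] z = z
    have hd : orderOf f ∣ p ^ 2 := by rw [hord]
    have h1 : f ^ (p ^ 2) = 1 := orderOf_dvd_iff_pow_eq_one.mp hd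
    rw [← Equiv.Perm.coe_pow, h1]
    rfl
  -- there is a point with minimal period p^2
  have hx0 : ∃ z, Function.minimalPeriod f z = p ^ 2 := by
    by_contra hcon
    push_neg at hcon
    have hfp : f ^ p = 1 := by
      ext z
      have hdvd := hper z
      obtain ⟨k, hk2, hk⟩ := (Nat.dvd_prime_pow hp).mp hdvd
      have hk1 : k ≤ 1 := by
        rcases Nat.lt_or_ge k 2 with h | h
        · omega
        · exact absurd (hk.trans (by rw [le_antisymm hk2 h])) (hcon z)
      have hdp : Function.minimalPeriod f z ∣ p := by
        rw [hk]
        calc p ^ k ∣ p ^ 1 := pow_dvd_pow p hk1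
        _ = p := pow_one p
      have := (Function.isPeriodicPt_iff_minimalPeriod_dvd.mpr hdp)
      have h2 : (⇑f)^[p] z = z := this
      rw [← Equiv.Perm.coe_pow] at h2
      exact h2
    have : orderOf f ∣ p := orderOf_dvd_of_pow_eq_one hfp
    rw [hord] at this
    have := Nat.le_of_dvd hp.pos this
    nlinarith [hp.two_le]
  obtain ⟨z, hz⟩ := hx0
  -- the map n ↦ f^n z  on Fin (p^2) is bijective
  set e : Fin (p ^ 2) → ZMod (p ^ 2) := fun n => (f ^ (n : ℕ)) z with he
  have hinj : Function.Injective e := by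
    intro m n hmn
    have h1 : (⇑f)^[(m : ℕ)] z = (⇑f)^[(n : ℕ)] z := by
      rw [← Equiv.Perm.coe_pow, ← Equiv.Perm.coe_pow]; exact hmn
    have := Function.iterate_injOn_Iio_minimalPeriod (f := ⇑f) (x := z)
      (by rw [hz]; exact Set.mem_Iio.mpr m.isLt) (by rw [hz]; exact Set.mem_Iio.mpr n.isLt) h1
    exact Fin.ext this
  have hsurj : Function.Surjective e := by
    have hcard : Fintype.card (Fin (p ^ 2)) = Fintype.card (ZMod (p ^ 2)) := by
      rw [Fintype.card_fin, ZMod.card]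
    exact ((Fintype.bijective_iff_injective_and_card e).mpr ⟨hinj, hcard⟩).2
  obtain ⟨m, hm⟩ := hsurj x
  obtain ⟨n, hn⟩ := hsurj y
  refine ⟨f ^ (n : ℕ) * (f ^ (m : ℕ))⁻¹, H.mul_mem (H.pow_mem hfH _) (H.inv_mem (H.pow_mem hfH _)), ?_⟩
  rw [Equiv.Perm.mul_apply, ← hm]
  show (f ^ (n : ℕ)) ((f ^ (m : ℕ))⁻¹ ((f ^ (m : ℕ)) z)) = y
  rw [Equiv.Perm.inv_def, Equiv.symm_apply_apply]
  exact hn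

theorem stmt_8 (p : ℕ) (hp : p.Prime) (hodd : Odd p)
    (H : Subgroup (Equiv.Perm (ZMod (p ^ 2))))
    (haff : ∀ f ∈ H, ∃ (a : ZMod (p ^ 2)) (u : (ZMod (p ^ 2))ˣ),
      ∀ x, f x = a + (u : ZMod (p ^ 2)) * x) :
    (∀ x y : ZMod (p ^ 2), ∃ f ∈ H, f x = y) ↔ ∃ f ∈ H, orderOf f = p ^ 2 := by
  constructor
  · intro hT
    haveI : Fact p.Prime := ⟨hp⟩
    haveI : NeZero p := ⟨hp.ne_zero⟩
    haveI : NeZero (p ^ 2) := ⟨pow_ne_zero 2 hp.ne_zero⟩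
    have hdvd : p ∣ p ^ 2 := dvd_pow_self p two_ne_zero
    let ψ : ZMod (p ^ 2) →+* ZMod p := ZMod.castHom hdvd (ZMod p)
    choose F hFH hF0 using hT 0
    choose A U hU using fun a => haff (F a) (hFH a)
    have hA : ∀ a, A a = a := by
      intro a
      have h := hU a 0
      rw [hF0 a] at h
      simpa using h.symm
    let φ : Fin p → (ZMod p)ˣ := fun i => Units.map ψ.toMonoidHom (U ((i : ℕ) : ZMod (p ^ 2)))
    have hcard : Fintype.card (ZMod p)ˣ < Fintype.card (Fin p) := by
      rw [ZMod.card_units, Fintype.card_fin]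
      have := hp.two_le
      omega
    obtain ⟨i, j, hij, hφ⟩ := Fintype.exists_ne_map_eq_of_card_lt φ hcard
    set a : ZMod (p ^ 2) := ((i : ℕ) : ZMod (p ^ 2)) with ha_def
    set b : ZMod (p ^ 2) := ((j : ℕ) : ZMod (p ^ 2)) with hb_def
    set W : (ZMod (p ^ 2))ˣ := U a * (U b)⁻¹ with hW_def
    set w : ZMod (p ^ 2) := (W : ZMod (p ^ 2)) with hw_def
    set g := F a * (F b)⁻¹ with hg_def
    -- inverse of F b
    have hFbinv : ∀ x, (F b)⁻¹ x = ((U b)⁻¹ : (ZMod (p ^ 2))ˣ) * (x - b) := by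
      intro x
      apply (F b).injective
      rw [Equiv.Perm.inv_def, Equiv.apply_symm_apply, hU b, hA b, ← mul_assoc, Units.mul_inv, one_mul]
      ring
    have hg : ∀ x, g x = (a - w * b) + w * x := by
      intro x
      rw [hg_def, Equiv.Perm.mul_apply, hFbinv, hU a, hA a, hw_def, hW_def]
      push_cast [Units.val_mul]
      ring
    -- ψ W = 1
    have hψW : ψ w = 1 := by
      have h1 : Units.map ψ.toMonoidHom W = 1 := by
        rw [hW_def, map_mul, map_inv]
        show φ i * (φ j)⁻¹ = 1
        rw [hφ, mul_inv_cancel]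
      have := congrArg Units.val h1
      simpa using this
    -- w = 1 + p * c
    have hker : (p : ℕ) ∣ (w - 1).val := by
      have h0 : ψ (w - 1) = 0 := by rw [map_sub, hψW, map_one, sub_self]
      have h1 : (((w - 1).val : ℕ) : ZMod p) = 0 := by
        rw [ZMod.natCast_val]
        exact h0
      exact (ZMod.natCast_eq_zero_iff _ p).mp h1
    obtain ⟨m, hm⟩ := hker
    have hw1 : w = 1 + (p : ZMod (p ^ 2)) * (m : ZMod (p ^ 2)) := by
      have h1 : ((((w - 1).val) : ℕ) : ZMod (p ^ 2)) = w - 1 := by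
        rw [ZMod.natCast_val, ZMod.cast_id]
      rw [hm] at h1
      push_cast at h1
      linear_combination -h1
    have hg' : ∀ x, g x = (a - w * b) + (1 + (p : ZMod (p ^ 2)) * (m : ZMod (p ^ 2))) * x := by
      intro x
      rw [hg x]
      linear_combination x * hw1
    -- ψ (a - w * b) ≠ 0
    have hψa₀ : ψ (a - w * b) ≠ 0 := by
      rw [map_sub, map_mul, hψW, one_mul, ha_def, hb_def, map_natCast, map_natCast]
      intro hz
      apply hij
      have heq : (((i : ℕ) : ZMod p)) = ((j : ℕ) : ZMod p) := by
        have := sub_eq_zero.mp hz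
        exact this
      have hv : ((i : ℕ) : ZMod p).val = ((j : ℕ) : ZMod p).val := by rw [heq]
      rw [ZMod.val_natCast_of_lt i.isLt, ZMod.val_natCast_of_lt j.isLt] at hv
      exact Fin.ext hv
    have ha₀ : (a - w * b) * (p : ZMod (p ^ 2)) ≠ 0 := by
      intro hz
      have hvd : ¬ ((p : ℕ) ∣ (a - w * b).val) := by
        rintro ⟨k, hk⟩
        apply hψa₀
        have h2 : ψ (a - w * b) = (((a - w * b).val : ℕ) : ZMod p) := by
          rw [ZMod.natCast_val]
          rfl
        rw [h2, hk]
        push_cast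
        simp
      apply hvd
      have h3 : (a - w * b) * (p : ZMod (p ^ 2)) = (((a - w * b).val * p : ℕ) : ZMod (p ^ 2)) := by
        push_cast
        rw [ZMod.natCast_val, ZMod.cast_id]
      rw [h3] at hz
      have h4 : p ^ 2 ∣ (a - w * b).val * p := (ZMod.natCast_eq_zero_iff _ _).mp hz
      obtain ⟨k, hk⟩ := h4
      refine ⟨k, ?_⟩
      have hppos := hp.pos
      have : (a - w * b).val * p = (p * k) * p := by rw [hk]; ring
      exact Nat.eq_of_mul_eq_mul_right hppos this
    exact ⟨g, H.mul_mem (hFH a) (H.inv_mem (hFH b)),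
      aux_order p hp hodd g (a - w * b) (m : ZMod (p ^ 2)) hg' ha₀⟩
  · rintro ⟨f, hfH, hord⟩ x y
    exact aux_trans p hp H f hfH hord x y
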